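/- Let K ∈ 𝓜_δ(dx), i.e., K(x,y) = Σ_{j≥0} α_j 2^j 𝟙_{(0,2^{−j}]}(δ(x,y)) with Σ|α_j| < ∞, partial sums Σ_{l≤j} α_l 2^l ≥ 0, Σ α_j = 1. Then the operator 𝒦f(x) = ∫_{[0,1)} K(x,y) f(y) dy satisfies 𝒦(𝟙_{[0,1)}) = 𝟙_{[0,1)}, and for each Haar function h supported on a dyadic interval of level j(h), 𝒦h = λ_h h with λ_h = Σ_{j ≥ j(h)} α_j. -/

import Mathlib

/-! For distinct `x, y ∈ [0,1)` the dyadic distance is `2^{-J}`, where `J` is the finest level at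
which `x` and `y` lie in a common dyadic interval. Hence, off the diagonal,
`K(x, ·) = Σ_l α_l 2^l 𝟙_{I_l(x)}` with `I_l(x)` the level-`l` dyadic interval containing `x`, and
integrating term by term (legitimate since `Σ |α_l| < ∞`) gives
`𝒦f(x) = Σ_l α_l · (mean of f over I_l(x))`. The constant function has mean `1` everywhere. A Haar
function of scale `j + 1` has mean `0` over every dyadic interval of level `≤ j`, which contains
either both halves of its support or neither, and it is constant on dyadic intervals of level
`> j`. -/

open Set MeasureTheory

/-- The dyadic distance on `[0,1)`. -/
noncomputable def dyadicDist (x y : ℝ) : ℝ :=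
  sInf {r : ℝ | ∃ j k : ℕ, r = (2 : ℝ)⁻¹ ^ j ∧
    x ∈ Set.Ico ((k : ℝ) / 2 ^ j) (((k : ℝ) + 1) / 2 ^ j) ∧
    y ∈ Set.Ico ((k : ℝ) / 2 ^ j) (((k : ℝ) + 1) / 2 ^ j)}

/-- The Haar function associated to the dyadic interval `I^j_k = [k2^{−j},(k+1)2^{−j})`. -/
noncomputable def haarFn (j k : ℕ) (x : ℝ) : ℝ :=
  (2 : ℝ) ^ ((j : ℝ) / 2) *
    (Set.indicator (Set.Ico ((k : ℝ) / 2 ^ j) (((k : ℝ) + 1 / 2) / 2 ^ j)) (fun _ => (1 : ℝ)) x -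
      Set.indicator (Set.Ico (((k : ℝ) + 1 / 2) / 2 ^ j) (((k : ℝ) + 1) / 2 ^ j))
        (fun _ => (1 : ℝ)) x)

noncomputable def dyadicInterval (j k : ℕ) : Set ℝ :=
  Ico ((k : ℝ) / 2 ^ j) (((k : ℝ) + 1) / 2 ^ j)

lemma mem_dyadicInterval_iff {x : ℝ} (hx : 0 ≤ x) {j k : ℕ} :
    x ∈ dyadicInterval j k ↔ ⌊x * 2 ^ j⌋₊ = k := by
  rw [Nat.floor_eq_iff (by positivity), dyadicInterval, mem_Ico, div_le_iff₀ (by positivity),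
    lt_div_iff₀ (by positivity)]

lemma measurableSet_dyadicInterval (j k : ℕ) : MeasurableSet (dyadicInterval j k) :=
  measurableSet_Ico

lemma nonneg_of_mem_dyadicInterval {x : ℝ} {j k : ℕ} (hx : x ∈ dyadicInterval j k) : 0 ≤ x :=
  le_trans (by positivity) hx.1

lemma floor_mul_two_pow_lt_iff {x : ℝ} (hx : 0 ≤ x) (j : ℕ) : ⌊x * 2 ^ j⌋₊ < 2 ^ j ↔ x < 1 := by
  rw [Nat.floor_lt (by positivity)]
  push_cast
  exact mul_lt_iff_lt_one_left (by positivity)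

lemma dyadicInterval_subset_Ico {j k : ℕ} (hk : k < 2 ^ j) : dyadicInterval j k ⊆ Ico 0 1 := by
  intro y hy
  have hy0 := nonneg_of_mem_dyadicInterval hy
  rw [mem_dyadicInterval_iff hy0] at hy
  exact ⟨hy0, (floor_mul_two_pow_lt_iff hy0 j).mp (hy ▸ hk)⟩

lemma measureReal_dyadicInterval (j k : ℕ) : volume.real (dyadicInterval j k) = 2⁻¹ ^ j := by
  rw [dyadicInterval, Real.volume_real_Ico_of_le (by gcongr; linarith), ← sub_div,
    add_sub_cancel_left, one_div, inv_pow]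

lemma floor_mul_two_pow_of_le (x : ℝ) {l i : ℕ} (h : l ≤ i) :
    ⌊x * 2 ^ l⌋₊ = ⌊x * 2 ^ i⌋₊ / 2 ^ (i - l) := by
  obtain ⟨n, rfl⟩ := Nat.exists_eq_add_of_le h
  rw [Nat.add_sub_cancel_left, ← Nat.floor_div_natCast]
  push_cast
  rw [pow_add, ← mul_assoc, mul_div_cancel_right₀ _ (by positivity)]

lemma dyadicInterval_subset_dyadicInterval {l i : ℕ} (h : l ≤ i) (n : ℕ) :
    dyadicInterval i n ⊆ dyadicInterval l (n / 2 ^ (i - l)) := by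
  intro y hy
  have hy0 := nonneg_of_mem_dyadicInterval hy
  rw [mem_dyadicInterval_iff hy0] at hy ⊢
  rw [floor_mul_two_pow_of_le y h, hy]

lemma disjoint_dyadicInterval {l m m' : ℕ} (h : m ≠ m') :
    Disjoint (dyadicInterval l m) (dyadicInterval l m') :=
  Set.disjoint_left.mpr fun _ hy hy' => h <|
    ((mem_dyadicInterval_iff (nonneg_of_mem_dyadicInterval hy)).mp hy).symm.trans
      ((mem_dyadicInterval_iff (nonneg_of_mem_dyadicInterval hy)).mp hy')

lemma measureReal_dyadicInterval_inter {l i : ℕ} (h : l ≤ i) (n m : ℕ) :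
    volume.real (dyadicInterval i n ∩ dyadicInterval l m) =
      if n / 2 ^ (i - l) = m then 2⁻¹ ^ i else 0 := by
  have hsub := dyadicInterval_subset_dyadicInterval h n
  split_ifs with hnm
  · rw [inter_eq_self_of_subset_left (hnm ▸ hsub), measureReal_dyadicInterval]
  · rw [((disjoint_dyadicInterval hnm).mono_left hsub).inter_eq, measureReal_empty]

lemma dyadicDist_eq_of_isGreatest {x y : ℝ} (hx : 0 ≤ x) (hy : 0 ≤ y) {J : ℕ}
    (hJ : IsGreatest {j | ⌊x * 2 ^ j⌋₊ = ⌊y * 2 ^ j⌋₊} J) : dyadicDist x y = 2⁻¹ ^ J := by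
  refine IsLeast.csInf_eq ⟨⟨J, _, rfl, (mem_dyadicInterval_iff hx).mpr rfl,
    (mem_dyadicInterval_iff hy).mpr hJ.1.symm⟩, ?_⟩
  rintro _ ⟨j, k, rfl, hxk, hyk⟩
  refine pow_le_pow_of_le_one (by norm_num) (by norm_num) (hJ.2 ?_)
  exact ((mem_dyadicInterval_iff hx).mp hxk).trans ((mem_dyadicInterval_iff hy).mp hyk).symm

lemma bddAbove_setOf_floor_eq {x y : ℝ} (hx : 0 ≤ x) (hy : 0 ≤ y) (hxy : x ≠ y) :
    BddAbove {j : ℕ | ⌊x * 2 ^ j⌋₊ = ⌊y * 2 ^ j⌋₊} := by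
  have hd : 0 < |x - y| := abs_pos.mpr (sub_ne_zero.mpr hxy)
  obtain ⟨N, hN⟩ := pow_unbounded_of_one_lt |x - y|⁻¹ (by norm_num : (1 : ℝ) < 2)
  refine ⟨N, fun j hj => ?_⟩
  have hfloor : ⌊x * 2 ^ j⌋ = ⌊y * 2 ^ j⌋ := by
    rw [← Int.natCast_floor_eq_floor (by positivity), ← Int.natCast_floor_eq_floor (by positivity)]
    exact congrArg _ hj
  have hclose : |x - y| * 2 ^ j < 1 := by
    simpa [← sub_mul, abs_mul] using Int.abs_sub_lt_one_of_floor_eq_floor hfloor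
  have hpow : (2 : ℝ) ^ j < 2 ^ N := by
    calc (2 : ℝ) ^ j < |x - y|⁻¹ := by simpa using (lt_inv_mul_iff₀ hd).mpr hclose
      _ < 2 ^ N := hN
  exact (pow_lt_pow_iff_right₀ (by norm_num)).mp hpow |>.le

lemma dyadicDist_mem_Ioc_iff {x y : ℝ} (hx : x ∈ Ico (0 : ℝ) 1) (hy : y ∈ Ico (0 : ℝ) 1)
    (hxy : x ≠ y) (j : ℕ) :
    dyadicDist x y ∈ Ioc 0 (2⁻¹ ^ j) ↔ ⌊x * 2 ^ j⌋₊ = ⌊y * 2 ^ j⌋₊ := by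
  set L := {j : ℕ | ⌊x * 2 ^ j⌋₊ = ⌊y * 2 ^ j⌋₊}
  have hL0 : 0 ∈ L := by
    simp [L, Nat.floor_eq_zero.mpr hx.2, Nat.floor_eq_zero.mpr hy.2]
  have hbdd := bddAbove_setOf_floor_eq hx.1 hy.1 hxy
  have hJ : IsGreatest L (sSup L) := ⟨Nat.sSup_mem ⟨0, hL0⟩ hbdd, fun _ => (le_csSup hbdd ·)⟩
  have hlower : ∀ i ≤ sSup L, i ∈ L := fun i hi => by
    simp only [L, mem_ofPred_eq, floor_mul_two_pow_of_le x hi, floor_mul_two_pow_of_le y hi,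
      hJ.1.out]
  rw [dyadicDist_eq_of_isGreatest hx.1 hy.1 hJ, mem_Ioc,
    pow_le_pow_iff_right_of_lt_one₀ (by norm_num) (by norm_num)]
  exact ⟨fun h => hlower j h.2, fun h => ⟨by positivity, hJ.2 h⟩⟩

lemma integral_tsum_indicator_mul {X : Type*} [MeasurableSpace X] {μ : Measure X}
    {s : ℕ → Set X} (hs : ∀ l, MeasurableSet (s l)) (hμs : ∀ l, μ (s l) ≠ ⊤) {c : ℕ → ℝ}
    (hc : Summable fun l => |c l| * μ.real (s l)) {f : X → ℝ} (hf : AEStronglyMeasurable f μ)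
    {C : ℝ} (hC : ∀ x, |f x| ≤ C) :
    ∫ x, ∑' l, (s l).indicator (fun x => c l * f x) x ∂μ = ∑' l, c l * ∫ x in s l, f x ∂μ := by
  have hint : ∀ l, IntegrableOn f (s l) μ := fun l =>
    Measure.integrableOn_of_bounded (hμs l) hf (ae_of_all _ hC)
  have hnorm : ∀ l,
      ∫ x, ‖(s l).indicator (fun x => c l * f x) x‖ ∂μ ≤ |c l| * μ.real (s l) * C := by
    intro l
    calc ∫ x, ‖(s l).indicator (fun x => c l * f x) x‖ ∂μ = ∫ x in s l, |c l| * |f x| ∂μ := by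
          simp_rw [norm_indicator_eq_indicator_norm, Real.norm_eq_abs, abs_mul]
          exact integral_indicator (hs l)
      _ ≤ ∫ x in s l, |c l| * C ∂μ :=
          setIntegral_mono ((hint l).norm.const_mul _) (integrableOn_const (hμs l))
            fun x => mul_le_mul_of_nonneg_left (hC x) (abs_nonneg _)
      _ = |c l| * μ.real (s l) * C := by
          rw [setIntegral_const, smul_eq_mul]; ring
  rw [← integral_tsum_of_summable_integral_norm
    (fun l => IntegrableOn.integrable_indicator ((hint l).const_mul (c l)) (hs l))
    (Summable.of_nonneg_of_le (fun l => integral_nonneg fun _ => norm_nonneg _) hnorm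
      (hc.mul_right C))]
  exact tsum_congr fun l => by rw [integral_indicator (hs l), integral_const_mul]

lemma indicator_Ioc_dyadicDist {x y : ℝ} (hx : x ∈ Ico (0 : ℝ) 1) (hy : y ∈ Ico (0 : ℝ) 1)
    (hxy : x ≠ y) (j : ℕ) :
    (Ioc (0 : ℝ) (2⁻¹ ^ j)).indicator (fun _ => (1 : ℝ)) (dyadicDist x y) =
      (dyadicInterval j ⌊x * 2 ^ j⌋₊).indicator (fun _ => 1) y := by
  have hy' : y ∈ dyadicInterval j ⌊x * 2 ^ j⌋₊ ↔ ⌊x * 2 ^ j⌋₊ = ⌊y * 2 ^ j⌋₊ :=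
    (mem_dyadicInterval_iff hy.1).trans eq_comm
  classical
  simp only [indicator_apply, dyadicDist_mem_Ioc_iff hx hy hxy, hy']

lemma setIntegral_kernel_mul {α : ℕ → ℝ} (hα_abs : Summable fun j => |α j|) {K : ℝ → ℝ → ℝ}
    (hK : ∀ x y, K x y =
      ∑' j : ℕ, α j * 2 ^ j *
        Set.indicator (Set.Ioc (0 : ℝ) ((2 : ℝ)⁻¹ ^ j)) (fun _ => (1 : ℝ)) (dyadicDist x y))
    {f : ℝ → ℝ} (hf : Measurable f) {C : ℝ} (hC : ∀ y, |f y| ≤ C) {x : ℝ} (hx : x ∈ Ico (0 : ℝ) 1) :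
    ∫ y in Ico (0 : ℝ) 1, K x y * f y =
      ∑' l, α l * 2 ^ l * ∫ y in dyadicInterval l ⌊x * 2 ^ l⌋₊, f y := by
  have hsub : ∀ l, dyadicInterval l ⌊x * 2 ^ l⌋₊ ⊆ Ico 0 1 := fun l =>
    dyadicInterval_subset_Ico ((floor_mul_two_pow_lt_iff hx.1 l).mpr hx.2)
  have hvol : ∀ l,
      (volume.restrict (Ico (0 : ℝ) 1)).real (dyadicInterval l ⌊x * 2 ^ l⌋₊) = 2⁻¹ ^ l :=
    fun l => by
      rw [measureReal_restrict_apply' measurableSet_Ico, inter_eq_self_of_subset_left (hsub l),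
        measureReal_dyadicInterval]
  have hc : Summable fun l => |α l * 2 ^ l| *
      (volume.restrict (Ico (0 : ℝ) 1)).real (dyadicInterval l ⌊x * 2 ^ l⌋₊) := by
    refine hα_abs.congr fun l => ?_
    rw [hvol, abs_mul, abs_pow, abs_two, mul_assoc, ← mul_pow]
    norm_num
  calc ∫ y in Ico (0 : ℝ) 1, K x y * f y
      = ∫ y in Ico (0 : ℝ) 1, ∑' l, (dyadicInterval l ⌊x * 2 ^ l⌋₊).indicator
          (fun y => α l * 2 ^ l * f y) y := by
        -- the diagonal `y = x`, where `dyadicDist x x = 0`, is a null set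
        refine integral_congr_ae ?_
        filter_upwards [ae_restrict_mem measurableSet_Ico, ae_restrict_of_ae (volume.ae_ne x)]
          with y hy hyx
        rw [hK, ← tsum_mul_right]
        refine tsum_congr fun l => ?_
        rw [indicator_Ioc_dyadicDist hx hy (Ne.symm hyx)]
        by_cases hmem : y ∈ dyadicInterval l ⌊x * 2 ^ l⌋₊ <;> simp [hmem]
    _ = ∑' l, α l * 2 ^ l * ∫ y in dyadicInterval l ⌊x * 2 ^ l⌋₊, f y ∂volume.restrict (Ico 0 1) :=
        integral_tsum_indicator_mul (fun _ => measurableSet_Ico)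
          (fun _ => (measure_lt_top _ _).ne) hc hf.aestronglyMeasurable hC
    _ = ∑' l, α l * 2 ^ l * ∫ y in dyadicInterval l ⌊x * 2 ^ l⌋₊, f y := by
        refine tsum_congr fun l => ?_
        rw [Measure.restrict_restrict (measurableSet_dyadicInterval _ _),
          inter_eq_self_of_subset_left (hsub l)]

lemma haarFn_eq_indicator (j k : ℕ) (y : ℝ) :
    haarFn j k y = 2 ^ ((j : ℝ) / 2) *
      ((dyadicInterval (j + 1) (2 * k)).indicator 1 y -
        (dyadicInterval (j + 1) (2 * k + 1)).indicator 1 y) := by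
  have hleft : (k : ℝ) / 2 ^ j = ((2 * k : ℕ) : ℝ) / 2 ^ (j + 1) := by push_cast; ring
  have hmid : ((k : ℝ) + 1 / 2) / 2 ^ j = (((2 * k : ℕ) : ℝ) + 1) / 2 ^ (j + 1) := by
    push_cast; ring
  have hmid' : ((k : ℝ) + 1 / 2) / 2 ^ j = ((2 * k + 1 : ℕ) : ℝ) / 2 ^ (j + 1) := by
    push_cast; ring
  have hright : ((k : ℝ) + 1) / 2 ^ j = (((2 * k + 1 : ℕ) : ℝ) + 1) / 2 ^ (j + 1) := by
    push_cast; ring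
  rw [haarFn, dyadicInterval, dyadicInterval, hleft, hright, ← hmid, ← hmid']
  rfl

lemma abs_haarFn_le (j k : ℕ) (y : ℝ) : |haarFn j k y| ≤ 2 ^ ((j : ℝ) / 2) := by
  rw [haarFn_eq_indicator, abs_mul, abs_of_pos (by positivity)]
  classical
  refine mul_le_of_le_one_right (by positivity) (abs_sub_le_of_nonneg_of_le ?_ ?_ ?_ ?_) <;>
    simp only [indicator_apply, Pi.one_apply] <;> split_ifs <;> norm_num

lemma measurable_haarFn (j k : ℕ) : Measurable (haarFn j k) := by
  unfold haarFn
  fun_prop (disch := measurability)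

lemma haarFn_eq_of_floor_eq {j k : ℕ} {x y : ℝ} (hx : 0 ≤ x) (hy : 0 ≤ y)
    (h : ⌊y * 2 ^ (j + 1)⌋₊ = ⌊x * 2 ^ (j + 1)⌋₊) : haarFn j k y = haarFn j k x := by
  classical
  simp only [haarFn_eq_indicator, indicator_apply, mem_dyadicInterval_iff hx,
    mem_dyadicInterval_iff hy, h, Pi.one_apply]

lemma setIntegral_haarFn_of_le {j k l : ℕ} (hl : l ≤ j) (m : ℕ) :
    ∫ y in dyadicInterval l m, haarFn j k y = 0 := by
  have hparent : 2 * k / 2 ^ (j + 1 - l) = (2 * k + 1) / 2 ^ (j + 1 - l) := by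
    rw [Nat.sub_add_comm hl, pow_succ', ← Nat.div_div_eq_div_mul, ← Nat.div_div_eq_div_mul]
    congr 1
    omega
  have hint : ∀ n, IntegrableOn ((dyadicInterval (j + 1) n).indicator (1 : ℝ → ℝ))
      (dyadicInterval l m) :=
    fun n => (integrable_indicator_iff (measurableSet_dyadicInterval _ _)).mpr
      (integrableOn_const measure_Ico_lt_top.ne) |>.integrableOn
  simp_rw [haarFn_eq_indicator]
  rw [integral_const_mul, integral_sub (hint _) (hint _),
    integral_indicator_one (measurableSet_dyadicInterval _ _),
    integral_indicator_one (measurableSet_dyadicInterval _ _),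
    measureReal_restrict_apply (measurableSet_dyadicInterval _ _),
    measureReal_restrict_apply (measurableSet_dyadicInterval _ _),
    measureReal_dyadicInterval_inter (hl.trans j.le_succ),
    measureReal_dyadicInterval_inter (hl.trans j.le_succ), hparent, sub_self, mul_zero]

lemma setIntegral_haarFn_of_lt {j k l : ℕ} (hl : j < l) {x : ℝ} (hx : 0 ≤ x) :
    ∫ y in dyadicInterval l ⌊x * 2 ^ l⌋₊, haarFn j k y = 2⁻¹ ^ l * haarFn j k x := by
  have hconst : ∀ y ∈ dyadicInterval l ⌊x * 2 ^ l⌋₊, haarFn j k y = haarFn j k x := by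
    intro y hy
    have hy0 := nonneg_of_mem_dyadicInterval hy
    refine haarFn_eq_of_floor_eq hx hy0 ?_
    rw [floor_mul_two_pow_of_le y hl, floor_mul_two_pow_of_le x hl,
      (mem_dyadicInterval_iff hy0).mp hy]
  rw [setIntegral_congr_fun (measurableSet_dyadicInterval _ _) hconst, setIntegral_const,
    measureReal_dyadicInterval, smul_eq_mul]

theorem stmt14_general (α : ℕ → ℝ) (hα_abs : Summable (fun j => |α j|))
    (hα_sum : ∑' j, α j = 1)
    (K : ℝ → ℝ → ℝ)
    (hK : ∀ x y, K x y =
      ∑' j : ℕ, α j * 2 ^ j *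
        Set.indicator (Set.Ioc (0 : ℝ) ((2 : ℝ)⁻¹ ^ j)) (fun _ => (1 : ℝ)) (dyadicDist x y)) :
    (∀ x ∈ Ico (0 : ℝ) 1, ∫ y in Ico (0 : ℝ) 1, K x y * 1 = 1) ∧
    (∀ j k : ℕ, k < 2 ^ j → ∀ x ∈ Ico (0 : ℝ) 1,
      ∫ y in Ico (0 : ℝ) 1, K x y * haarFn j k y =
        (∑' i : ℕ, if j + 1 ≤ i then α i else 0) * haarFn j k x) := by
  have hscale : ∀ l : ℕ, (2 : ℝ) ^ l * 2⁻¹ ^ l = 1 := fun l => by rw [← mul_pow]; norm_num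
  constructor
  · intro x hx
    rw [setIntegral_kernel_mul hα_abs hK measurable_const (fun _ => le_of_eq abs_one) hx]
    refine (tsum_congr fun l => ?_).trans hα_sum
    rw [setIntegral_const, measureReal_dyadicInterval, smul_eq_mul, mul_one, mul_assoc, hscale,
      mul_one]
  · intro j k _ x hx
    rw [setIntegral_kernel_mul hα_abs hK (measurable_haarFn j k) (abs_haarFn_le j k) hx,
      ← tsum_mul_right]
    refine tsum_congr fun l => ?_
    split_ifs with hl
    · rw [setIntegral_haarFn_of_lt hl hx.1, mul_assoc, ← mul_assoc (2 ^ l), hscale, one_mul]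
    · rw [setIntegral_haarFn_of_le (by omega), mul_zero, zero_mul]

/-- The operator `𝒦f(x) = ∫ K(x,y) f(y) dy` for a dyadic Markov kernel `K ∈ 𝓜_δ(dx)` fixes
the constant `𝟙_{[0,1)}` and has each Haar function as an eigenfunction with eigenvalue
`λ_h = Σ_{i ≥ j(h)} α_i`, where `j(h) = j+1` is the scale of the halves of its support. -/
theorem stmt14 (α : ℕ → ℝ) (hα_abs : Summable (fun j => |α j|))
    (hα_partial : ∀ j : ℕ, 0 ≤ ∑ l ∈ Finset.range (j + 1), α l * 2 ^ l)
    (hα_sum : ∑' j, α j = 1)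
    (K : ℝ → ℝ → ℝ)
    (hK : ∀ x y, K x y =
      ∑' j : ℕ, α j * 2 ^ j *
        Set.indicator (Set.Ioc (0 : ℝ) ((2 : ℝ)⁻¹ ^ j)) (fun _ => (1 : ℝ)) (dyadicDist x y)) :
    (∀ x ∈ Ico (0 : ℝ) 1, ∫ y in Ico (0 : ℝ) 1, K x y * 1 = 1) ∧
    (∀ j k : ℕ, k < 2 ^ j → ∀ x ∈ Ico (0 : ℝ) 1,
      ∫ y in Ico (0 : ℝ) 1, K x y * haarFn j k y =
        (∑' i : ℕ, if j + 1 ≤ i then α i else 0) * haarFn j k x) :=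
  stmt14_general α hα_abs hα_sum K hK
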